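/- Let n ≥ 1 be a natural number, let Γ_Tx > 0 be real, and set Γ_chunk = n · Γ_Tx. Suppose a list of real numbers, each in (0, Γ_Tx], is partitioned greedily into contiguous chunks so that each chunk's sum is at most Γ_chunk and no further element can be appended to any chunk except the last without exceeding Γ_chunk. Then every chunk except possibly the last has sum c satisfying (1 − 1/n) · Γ_chunk < c ≤ Γ_chunk. -/

import Mathlib

/-!
Each chunk `c` other than the last is "full": appending the first element `x` of the next
chunk would exceed the capacity, so `Γ_chunk < c.sum + x`. Since `x ≤ Γ_Tx` and
`Γ_chunk - Γ_Tx = (1 - 1/n) · Γ_chunk`, the lower bound follows; the upper bound is the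
capacity constraint itself.
-/

namespace List

variable {α : Type*}

theorem getD_mem {l : List α} {j : ℕ} (d : α) (hj : j < l.length) : l.getD j d ∈ l := by
  rw [getD_eq_getElem _ _ hj]
  exact getElem_mem hj

theorem headI_mem_flatten [Inhabited α] {L : List (List α)} {l : List α} (hl : l ∈ L)
    (hne : l ≠ []) : l.headI ∈ L.flatten := by
  obtain ⟨x, t, rfl⟩ := exists_cons_of_ne_nil hne
  exact mem_flatten.2 ⟨_, hl, mem_cons_self⟩

end List

theorem one_sub_one_div_mul_mul_self {K : Type*} [Field K] {n : K} (hn : n ≠ 0) (b : K) :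
    (1 - 1 / n) * (n * b) = n * b - b := by
  field_simp

theorem stmt_10_general (n : ℕ) (hn : 1 ≤ n) (ΓTx : ℝ)
    (Γchunk : ℝ) (hΓc : Γchunk = (n : ℝ) * ΓTx)
    (T : List ℝ) (hT : ∀ x ∈ T, 0 < x ∧ x ≤ ΓTx)
    (C : List (List ℝ)) (hjoin : C.flatten = T) (hne : ∀ c ∈ C, c ≠ [])
    (hle : ∀ c ∈ C, c.sum ≤ Γchunk)
    (hgreedy : ∀ j : ℕ, j + 1 < C.length →
        Γchunk < (C.getD j []).sum + (C.getD (j + 1) []).headI) :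
    ∀ j : ℕ, j + 1 < C.length →
      (1 - 1 / (n : ℝ)) * Γchunk < (C.getD j []).sum
      ∧ (C.getD j []).sum ≤ Γchunk := by
  intro j hj
  have hnext_mem : C.getD (j + 1) [] ∈ C := List.getD_mem _ hj
  have hhead_le : (C.getD (j + 1) []).headI ≤ ΓTx :=
    (hT _ (hjoin ▸ List.headI_mem_flatten hnext_mem (hne _ hnext_mem))).2
  have hn0 : (n : ℝ) ≠ 0 := by positivity
  refine ⟨?_, hle _ (List.getD_mem _ (Nat.lt_of_succ_lt hj))⟩
  rw [hΓc, one_sub_one_div_mul_mul_self hn0, ← hΓc]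
  linarith [hgreedy j hj]

/-- Given `Γ_chunk = n · Γ_Tx` (`n ≥ 1`), if a list of reals in `(0, Γ_Tx]` is partitioned
greedily into contiguous nonempty chunks — each chunk's sum at most `Γ_chunk`, and no
further element can be appended to any chunk except the last without exceeding `Γ_chunk` —
then every chunk except possibly the last has sum `c` with
`(1 - 1/n) · Γ_chunk < c ≤ Γ_chunk`. -/
theorem stmt_10 (n : ℕ) (hn : 1 ≤ n) (ΓTx : ℝ) (hΓ0 : 0 < ΓTx)
    (Γchunk : ℝ) (hΓc : Γchunk = (n : ℝ) * ΓTx)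
    (T : List ℝ) (hT : ∀ x ∈ T, 0 < x ∧ x ≤ ΓTx)
    (C : List (List ℝ)) (hjoin : C.flatten = T) (hne : ∀ c ∈ C, c ≠ [])
    (hle : ∀ c ∈ C, c.sum ≤ Γchunk)
    (hgreedy : ∀ j : ℕ, j + 1 < C.length →
        Γchunk < (C.getD j []).sum + (C.getD (j + 1) []).headI) :
    ∀ j : ℕ, j + 1 < C.length →
      (1 - 1 / (n : ℝ)) * Γchunk < (C.getD j []).sum
      ∧ (C.getD j []).sum ≤ Γchunk :=
  stmt_10_general n hn ΓTx Γchunk hΓc T hT C hjoin hne hle hgreedy
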